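/- For the cyclic shuffle given by permuting batches cyclically (A_j^{t+1} = A_{j-1 mod K}^t), any achievable rate satisfies R ≥ ((K-1)/K)·N, where rate is measured in units of data points with i.i.d. points of entropy d. -/

import Mathlib

/-!
Worker `j` recovers batch `B (j - 1)` from `B j` and `X`. Since conditioning on more can only
lower conditional entropy (strong subadditivity), the points of `B 0`, `B (-1)`, `B (-2)`, … are
recovered one batch after another from `B 0` and `X` alone, so
`N d = H(all) ≤ H(all, X) = H(B 0, X) ≤ H(B 0) + H(X) ≤ (N / K) d + R d`.
-/

open Finset

/-- Shannon entropy (in nats) of a random variable `X` on a finite probability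
space with mass function `μ`. -/
noncomputable def ent {Ω : Type*} [Fintype Ω] {α : Type*} [Fintype α] [DecidableEq α]
    (μ : Ω → ℝ) (X : Ω → α) : ℝ :=
  - ∑ a : α, (∑ ω ∈ Finset.univ.filter (fun ω => X ω = a), μ ω) *
      Real.log (∑ ω ∈ Finset.univ.filter (fun ω => X ω = a), μ ω)

/-- Conditional entropy `H(X | Y) = H(X, Y) - H(Y)`. -/
noncomputable def condEnt {Ω : Type*} [Fintype Ω] {α β : Type*}
    [Fintype α] [DecidableEq α] [Fintype β] [DecidableEq β]
    (μ : Ω → ℝ) (X : Ω → α) (Y : Ω → β) : ℝ :=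
  ent μ (fun ω => (X ω, Y ω)) - ent μ Y

/-- Mutual information `I(X ; Y) = H(X) + H(Y) - H(X, Y)`. -/
noncomputable def mutInfo {Ω : Type*} [Fintype Ω] {α β : Type*}
    [Fintype α] [DecidableEq α] [Fintype β] [DecidableEq β]
    (μ : Ω → ℝ) (X : Ω → α) (Y : Ω → β) : ℝ :=
  ent μ X + ent μ Y - ent μ (fun ω => (X ω, Y ω))

open Real

noncomputable def mass {Ω α : Type*} [Fintype Ω] [DecidableEq α] (μ : Ω → ℝ) (X : Ω → α)
    (a : α) : ℝ :=
  ∑ ω ∈ univ.filter (fun ω => X ω = a), μ ω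

section Mass

variable {Ω α β : Type*} [Fintype Ω] [DecidableEq α] [DecidableEq β] {μ : Ω → ℝ}

lemma mass_nonneg (hμ : ∀ ω, 0 ≤ μ ω) (X : Ω → α) (a : α) : 0 ≤ mass μ X a :=
  sum_nonneg fun ω _ => hμ ω

lemma sum_mass_pair_right [Fintype β] (μ : Ω → ℝ) (X : Ω → α) (Y : Ω → β) (a : α) :
    ∑ b, mass μ (fun ω => (X ω, Y ω)) (a, b) = mass μ X a := by
  simp only [mass, Prod.mk.injEq, ← filter_filter, sum_fiberwise]

variable [Fintype α]

lemma sum_mass (μ : Ω → ℝ) (X : Ω → α) : ∑ a, mass μ X a = ∑ ω, μ ω :=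
  sum_fiberwise _ _ _

lemma mass_comp (μ : Ω → ℝ) (X : Ω → α) (h : α → β) (b : β) :
    mass μ (fun ω => h (X ω)) b = ∑ a ∈ univ.filter (fun a => h a = b), mass μ X a := by
  simp only [mass]
  rw [sum_fiberwise_eq_sum_filter]
  simp

lemma mass_le_mass_comp (hμ : ∀ ω, 0 ≤ μ ω) (X : Ω → α) (h : α → β) (a : α) :
    mass μ X a ≤ mass μ (fun ω => h (X ω)) (h a) := by
  rw [mass_comp μ X h (h a)]
  exact single_le_sum (fun a' _ => mass_nonneg hμ X a') (by simp)

end Mass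

lemma sum_mul_log_le_sum_mul_log {ι : Type*} (s : Finset ι) {f g : ι → ℝ}
    (hf : ∀ i ∈ s, 0 ≤ f i) (hg : ∀ i ∈ s, 0 ≤ g i) (hfg : ∀ i ∈ s, 0 < f i → 0 < g i)
    (hsum : ∑ i ∈ s, g i ≤ ∑ i ∈ s, f i) :
    ∑ i ∈ s, f i * log (g i) ≤ ∑ i ∈ s, f i * log (f i) := by
  have hterm : ∀ i ∈ s, f i * log (g i) - f i * log (f i) ≤ g i - f i := by
    intro i hi
    rcases (hf i hi).eq_or_lt with h0 | h0
    · simpa [← h0] using hg i hi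
    · have hgi := hfg i hi h0
      calc f i * log (g i) - f i * log (f i) = f i * log (g i / f i) := by
            rw [log_div hgi.ne' h0.ne']; ring
        _ ≤ f i * (g i / f i - 1) :=
            mul_le_mul_of_nonneg_left (log_le_sub_one_of_pos (div_pos hgi h0)) h0.le
        _ = g i - f i := by field_simp
  have htotal := sum_le_sum hterm
  simp only [sum_sub_distrib] at htotal
  linarith

section Entropy

variable {Ω α β γ : Type*} [Fintype Ω] [Fintype α] [DecidableEq α] [Fintype β] [DecidableEq β]
  [Fintype γ] [DecidableEq γ] {μ : Ω → ℝ}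

lemma ent_eq_neg_sum_mass (μ : Ω → ℝ) (X : Ω → α) :
    ent μ X = -∑ a, mass μ X a * log (mass μ X a) := rfl

lemma ent_comp_eq_neg_sum (μ : Ω → ℝ) (X : Ω → α) (h : α → β) :
    ent μ (fun ω => h (X ω)) =
      -∑ a, mass μ X a * log (mass μ (fun ω => h (X ω)) (h a)) := by
  rw [ent_eq_neg_sum_mass, ← sum_fiberwise univ h]
  congr 1
  refine sum_congr rfl fun b _ => ?_
  rw [mass_comp μ X h b, sum_mul]
  refine sum_congr rfl fun a ha => ?_
  rw [(mem_filter.mp ha).2, mass_comp μ X h b]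

lemma ent_comp_le (hμ : ∀ ω, 0 ≤ μ ω) (X : Ω → α) (h : α → β) :
    ent μ (fun ω => h (X ω)) ≤ ent μ X := by
  rw [ent_comp_eq_neg_sum, ent_eq_neg_sum_mass, neg_le_neg_iff]
  refine sum_le_sum fun a _ => ?_
  rcases (mass_nonneg hμ X a).eq_or_lt with h0 | h0
  · simp [← h0]
  · exact mul_le_mul_of_nonneg_left (log_le_log h0 (mass_le_mass_comp hμ X h a)) h0.le

lemma ent_of_comp_eq_of_comp (hμ : ∀ ω, 0 ≤ μ ω) {X : Ω → α} {Y : Ω → β} (f : α → β)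
    (g : β → α) (hY : ∀ ω, Y ω = f (X ω)) (hX : ∀ ω, X ω = g (Y ω)) :
    ent μ X = ent μ Y := by
  have hXY := ent_comp_le hμ Y g
  have hYX := ent_comp_le hμ X f
  simp only [← hX, ← hY] at hXY hYX
  exact le_antisymm hXY hYX

lemma ent_const_unit (hμ : ∑ ω, μ ω = 1) : ent μ (fun _ => ()) = 0 := by
  simp [ent_eq_neg_sum_mass, mass, hμ]

/-- Strong subadditivity. -/
theorem ent_triple_add_ent_le (hμ : ∀ ω, 0 ≤ μ ω) (A : Ω → α) (B : Ω → β) (C : Ω → γ) :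
    ent μ (fun ω => ((A ω, B ω), C ω)) + ent μ B ≤
      ent μ (fun ω => (A ω, B ω)) + ent μ (fun ω => (B ω, C ω)) := by
  set Z : Ω → (α × β) × γ := fun ω => ((A ω, B ω), C ω)
  set T := mass μ Z
  set u := mass μ fun ω => (Z ω).1
  set v := mass μ fun ω => ((Z ω).1.2, (Z ω).2)
  set w := mass μ fun ω => (Z ω).1.2
  have hTu : ∀ z, T z ≤ u z.1 := mass_le_mass_comp hμ Z Prod.fst
  have hTv : ∀ z, T z ≤ v (z.1.2, z.2) := mass_le_mass_comp hμ Z fun z => (z.1.2, z.2)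
  have huw : ∀ p, u p ≤ w p.2 := mass_le_mass_comp hμ (fun ω => (Z ω).1) Prod.snd
  -- Gibbs' inequality against the reference weights `u v / w`, of total mass at most one
  have hsum : ∑ z : (α × β) × γ, u z.1 * v (z.1.2, z.2) / w z.1.2 ≤ ∑ z, T z :=
    calc ∑ z : (α × β) × γ, u z.1 * v (z.1.2, z.2) / w z.1.2
        = ∑ p : α × β, u p * (w p.2 / w p.2) := by
          rw [Fintype.sum_prod_type]
          refine sum_congr rfl fun p _ => ?_
          dsimp only
          rw [← sum_div, ← mul_sum, sum_mass_pair_right, mul_div_assoc]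
      _ ≤ ∑ p : α × β, u p :=
          sum_le_sum fun p _ => mul_le_of_le_one_right (mass_nonneg hμ _ p) (div_self_le_one _)
      _ = ∑ z, T z := by rw [sum_mass, sum_mass]
  have hlog : ∀ z : (α × β) × γ, T z * log (u z.1 * v (z.1.2, z.2) / w z.1.2) =
      T z * log (u z.1) + T z * log (v (z.1.2, z.2)) - T z * log (w z.1.2) := by
    intro z
    rcases (mass_nonneg hμ Z z).eq_or_lt with h0 | h0
    · rw [show T z = 0 from h0.symm]; ring
    · have hu := h0.trans_le (hTu z)
      rw [log_div (mul_pos hu (h0.trans_le (hTv z))).ne' (hu.trans_le (huw z.1)).ne',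
        log_mul hu.ne' (h0.trans_le (hTv z)).ne']
      ring
  have hgibbs := sum_mul_log_le_sum_mul_log univ (f := T)
    (g := fun z => u z.1 * v (z.1.2, z.2) / w z.1.2) (fun z _ => mass_nonneg hμ Z z)
    (fun z _ => div_nonneg (mul_nonneg (mass_nonneg hμ _ _) (mass_nonneg hμ _ _))
      (mass_nonneg hμ _ _))
    (fun z _ hz => div_pos (mul_pos (hz.trans_le (hTu z)) (hz.trans_le (hTv z)))
      ((hz.trans_le (hTu z)).trans_le (huw z.1))) hsum
  simp only [hlog, sum_add_distrib, sum_sub_distrib] at hgibbs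
  have hAB : ent μ (fun ω => (A ω, B ω)) = -∑ z, T z * log (u z.1) :=
    ent_comp_eq_neg_sum μ Z Prod.fst
  have hBC : ent μ (fun ω => (B ω, C ω)) = -∑ z, T z * log (v (z.1.2, z.2)) :=
    ent_comp_eq_neg_sum μ Z fun z => (z.1.2, z.2)
  have hB : ent μ B = -∑ z, T z * log (w z.1.2) := ent_comp_eq_neg_sum μ Z fun z => z.1.2
  rw [hAB, hBC, hB, ent_eq_neg_sum_mass]
  linarith

theorem ent_pair_le (hμ0 : ∀ ω, 0 ≤ μ ω) (hμ1 : ∑ ω, μ ω = 1) (X : Ω → α) (Y : Ω → β) :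
    ent μ (fun ω => (X ω, Y ω)) ≤ ent μ X + ent μ Y := by
  have hssa := ent_triple_add_ent_le hμ0 X (fun _ => ()) Y
  rwa [ent_const_unit hμ1, add_zero,
    ent_of_comp_eq_of_comp hμ0 (fun p => (p.1.1, p.2)) (fun p => ((p.1, ()), p.2))
      (fun _ => rfl) (fun _ => rfl),
    ent_of_comp_eq_of_comp hμ0 (fun p => p.1) (fun a => (a, ())) (fun _ => rfl) (fun _ => rfl),
    ent_of_comp_eq_of_comp hμ0 (fun p => p.2) (fun b => ((), b)) (fun _ => rfl) (fun _ => rfl)]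
    at hssa

lemma condEnt_nonneg (hμ : ∀ ω, 0 ≤ μ ω) (X : Ω → α) (Y : Ω → β) : 0 ≤ condEnt μ X Y :=
  sub_nonneg.mpr (ent_comp_le hμ (fun ω => (X ω, Y ω)) Prod.snd)

lemma condEnt_le_condEnt_comp (hμ : ∀ ω, 0 ≤ μ ω) (X : Ω → α) (Y : Ω → β) (h : β → γ) :
    condEnt μ X Y ≤ condEnt μ X (fun ω => h (Y ω)) := by
  have hssa := ent_triple_add_ent_le hμ X (fun ω => h (Y ω)) Y
  rw [ent_of_comp_eq_of_comp hμ (fun p => (p.1.1, p.2)) (fun p => ((p.1, h p.2), p.2))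
      (fun _ => rfl) (fun _ => rfl),
    ent_of_comp_eq_of_comp hμ (fun p => p.2) (fun b => (h b, b)) (fun _ => rfl)
      (fun _ => rfl)] at hssa
  simp only [condEnt]
  linarith

lemma ent_pair_eq_of_condEnt_comp_eq_zero (hμ : ∀ ω, 0 ≤ μ ω)
    {X : Ω → α} {Y : Ω → β} (h : β → γ) (hX : condEnt μ X (fun ω => h (Y ω)) = 0) :
    ent μ (fun ω => (X ω, Y ω)) = ent μ Y := by
  have hle := condEnt_le_condEnt_comp hμ X Y h
  have hge := condEnt_nonneg hμ X Y
  simp only [condEnt] at hle hge hX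
  linarith

end Entropy

section Batches

variable {Ω ι γ : Type*} [DecidableEq ι]

def batch (x : ι → Ω → γ) (S : Finset ι) (ω : Ω) : ι → Option γ :=
  fun m => if m ∈ S then some (x m ω) else none

variable (x : ι → Ω → γ)

lemma batch_of_subset {S T : Finset ι} (hST : S ⊆ T) (ω : Ω) :
    batch x S ω = fun m => if m ∈ S then batch x T ω m else none := by
  funext m
  by_cases hm : m ∈ S
  · simp [batch, hm, hST hm]
  · simp [batch, hm]

lemma batch_union (S T : Finset ι) (ω : Ω) :
    batch x (S ∪ T) ω = fun m => if m ∈ S then batch x S ω m else batch x T ω m := by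
  funext m
  by_cases hS : m ∈ S <;> by_cases hT : m ∈ T <;> simp [batch, hS, hT]

variable [Fintype Ω] [Fintype ι] [Fintype γ] [DecidableEq γ] {χ : Type*} [Fintype χ]
  [DecidableEq χ] {μ : Ω → ℝ}

lemma ent_batch_union_eq (hμ : ∀ ω, 0 ≤ μ ω) (Y : Ω → χ) {S C T : Finset ι} (hCT : C ⊆ T)
    (hdec : condEnt μ (batch x S) (fun ω => (batch x C ω, Y ω)) = 0) :
    ent μ (fun ω => (batch x (S ∪ T) ω, Y ω)) = ent μ (fun ω => (batch x T ω, Y ω)) := by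
  have hsplit : ent μ (fun ω => (batch x (S ∪ T) ω, Y ω)) =
      ent μ (fun ω => (batch x S ω, (batch x T ω, Y ω))) :=
    ent_of_comp_eq_of_comp hμ
      (fun p => ((fun m => if m ∈ S then p.1 m else none),
        ((fun m => if m ∈ T then p.1 m else none), p.2)))
      (fun q => ((fun m => if m ∈ S then q.1 m else q.2.1 m), q.2.2))
      (fun ω => by
        rw [batch_of_subset x (show S ⊆ S ∪ T from subset_union_left) ω,
          batch_of_subset x (show T ⊆ S ∪ T from subset_union_right) ω])
      (fun ω => by rw [batch_union])
  let restrictC : (ι → Option γ) × χ → (ι → Option γ) × χ :=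
    fun q => ((fun m => if m ∈ C then q.1 m else none), q.2)
  have hC : (fun ω => (batch x C ω, Y ω)) = fun ω => restrictC (batch x T ω, Y ω) :=
    funext fun ω => by rw [batch_of_subset x hCT]
  rw [hC] at hdec
  rw [hsplit, ent_pair_eq_of_condEnt_comp_eq_zero hμ restrictC hdec]

lemma ent_batch_biUnion_iterate_eq (hμ : ∀ ω, 0 ≤ μ ω) (Y : Ω → χ)
    {κ : Type*} (B : κ → Finset ι) (f : κ → κ)
    (hdec : ∀ j, condEnt μ (batch x (B (f j))) (fun ω => (batch x (B j) ω, Y ω)) = 0)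
    (j₀ : κ) (r : ℕ) :
    ent μ (fun ω => (batch x ((range (r + 1)).biUnion fun i => B (f^[i] j₀)) ω, Y ω)) =
      ent μ (fun ω => (batch x (B j₀) ω, Y ω)) := by
  induction r with
  | zero => simp
  | succ r ih =>
    rw [range_add_one, biUnion_insert, Function.iterate_succ_apply',
      ent_batch_union_eq x hμ Y ?_ (hdec _), ih]
    exact subset_biUnion_of_mem (fun i => B (f^[i] j₀)) (self_mem_range_succ r)

end Batches

open Fin.NatCast in
lemma Fin.exists_iterate_sub_one_eq {n : ℕ} (k : Fin (n + 1)) :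
    ∃ i < n + 1, (fun j => j - 1)^[i] 0 = k := by
  have hsub : (fun j : Fin (n + 1) => j - 1) = (· + -1) := funext fun j => sub_eq_add_neg j 1
  refine ⟨(-k).val, (-k).isLt, ?_⟩
  rw [hsub, add_right_iterate_apply_zero, smul_neg, nsmul_one, Fin.cast_val_eq_self, neg_neg]

theorem stmt18_general {Ω γ χ : Type} [Fintype Ω] [Fintype γ] [DecidableEq γ]
    [Fintype χ] [DecidableEq χ]
    (μ : Ω → ℝ) (hμ0 : ∀ ω, 0 ≤ μ ω) (hμ1 : ∑ ω, μ ω = 1)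
    (N n : ℕ)
    (d : ℝ) (hd : 0 < d)
    (x : Fin N → Ω → γ)
    (hiid : ∀ T : Finset (Fin N),
      ent μ (fun ω => fun m : Fin N => if m ∈ T then some (x m ω) else none) =
        T.card * d)
    (B : Fin (n + 1) → Finset (Fin N))
    (hcard : ∀ k, (B k).card = N / (n + 1))
    (hcover : ∀ m : Fin N, ∃ k, m ∈ B k)
    (X : Ω → χ) (R : ℝ) (hX : ent μ X = R * d)
    (hdec : ∀ j : Fin (n + 1),
      condEnt μ
        (fun ω => fun m : Fin N => if m ∈ B (j - 1) then some (x m ω) else none)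
        (fun ω =>
          ((fun m : Fin N => if m ∈ B j then some (x m ω) else none), X ω)) = 0) :
    R ≥ (((n : ℝ) + 1 - 1) / ((n : ℝ) + 1)) * N := by
  have hent : ∀ T, ent μ (batch x T) = T.card * d := hiid
  have hall : (range (n + 1)).biUnion (fun i => B ((fun j => j - 1)^[i] 0)) = univ :=
    eq_univ_of_forall fun m => by
      obtain ⟨k, hk⟩ := hcover m
      obtain ⟨i, hi, rfl⟩ := Fin.exists_iterate_sub_one_eq k
      exact mem_biUnion.mpr ⟨i, mem_range.mpr hi, hk⟩
  have hchain := ent_batch_biUnion_iterate_eq x hμ0 X B (fun j => j - 1) hdec 0 n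
  rw [hall] at hchain
  have hbound : (N : ℝ) * d ≤ ((N / (n + 1) : ℕ) : ℝ) * d + R * d :=
    calc (N : ℝ) * d = ent μ (batch x univ) := by rw [hent, card_univ, Fintype.card_fin]
      _ ≤ ent μ (fun ω => (batch x univ ω, X ω)) :=
          ent_comp_le hμ0 (fun ω => (batch x univ ω, X ω)) Prod.fst
      _ = ent μ (fun ω => (batch x (B 0) ω, X ω)) := hchain
      _ ≤ ent μ (batch x (B 0)) + ent μ X := ent_pair_le hμ0 hμ1 _ _
      _ = ((N / (n + 1) : ℕ) : ℝ) * d + R * d := by rw [hent, hcard, hX]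
  have hfloor : ((N / (n + 1) : ℕ) : ℝ) ≤ N / ((n : ℝ) + 1) := by
    exact_mod_cast Nat.cast_div_le
  have hR : (N : ℝ) - N / ((n : ℝ) + 1) ≤ R :=
    le_of_mul_le_mul_right (by nlinarith) hd
  calc (((n : ℝ) + 1 - 1) / ((n : ℝ) + 1)) * N = N - N / ((n : ℝ) + 1) := by field_simp
    _ ≤ R := hR

/-- Cyclic shuffle lower bound. `N` i.i.d. data points of entropy
`d > 0` each (i.i.d. formalized by: the joint entropy of any subset `T` of points
is `|T|·d`), partitioned into `K = n+1` batches `B k` of size `N/K` (`K ∣ N`). At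
time `t+1` worker `j`'s batch equals worker `j-1`'s batch from time `t` (indices
mod `K`). A broadcast message `X` of entropy `R·d` allows each worker `j`, using
its old batch and `X`, to recover its new batch. Then `R ≥ ((K-1)/K)·N`. -/
theorem stmt18 {Ω γ χ : Type} [Fintype Ω] [Fintype γ] [DecidableEq γ]
    [Fintype χ] [DecidableEq χ]
    (μ : Ω → ℝ) (hμ0 : ∀ ω, 0 ≤ μ ω) (hμ1 : ∑ ω, μ ω = 1)
    (N n : ℕ) (hdvd : (n + 1) ∣ N)
    (d : ℝ) (hd : 0 < d)
    (x : Fin N → Ω → γ)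
    (hiid : ∀ T : Finset (Fin N),
      ent μ (fun ω => fun m : Fin N => if m ∈ T then some (x m ω) else none) =
        T.card * d)
    (B : Fin (n + 1) → Finset (Fin N))
    (hdisj : ∀ i j, i ≠ j → Disjoint (B i) (B j))
    (hcard : ∀ k, (B k).card = N / (n + 1))
    (hcover : ∀ m : Fin N, ∃ k, m ∈ B k)
    (X : Ω → χ) (R : ℝ) (hX : ent μ X = R * d)
    (hdec : ∀ j : Fin (n + 1),
      condEnt μ
        (fun ω => fun m : Fin N => if m ∈ B (j - 1) then some (x m ω) else none)
        (fun ω =>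
          ((fun m : Fin N => if m ∈ B j then some (x m ω) else none), X ω)) = 0) :
    R ≥ (((n : ℝ) + 1 - 1) / ((n : ℝ) + 1)) * N :=
  stmt18_general μ hμ0 hμ1 N n d hd x hiid B hcard hcover X R hX hdec
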